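/- arXiv:2104.15004 — 6 statements merged into one kernel-verified Lean document; each statement's English description precedes it below -/
import Mathlib

section
/- Let f(x) = x² + bx + c with integers b, c. If there are infinitely many positive integers n with f(n) > 0 and λ(f(n)) = −1, then there are also infinitely many positive integers n with f(n) > 0 and λ(f(n)) = 1 (so λ(f(n)) changes sign infinitely often). -/
/-- The Liouville function: `λ(n) = (-1)^Ω(n)` where `Ω(n)` counts prime factors
of `n` with multiplicity. -/
def liouvilleFun (n : ℕ) : ℤ := (-1) ^ n.primeFactorsList.length

lemma liouvilleFun_mul {a b : ℕ} (ha : a ≠ 0) (hb : b ≠ 0) :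
    liouvilleFun (a * b) = liouvilleFun a * liouvilleFun b := by
  unfold liouvilleFun
  rw [(Nat.perm_primeFactorsList_mul ha hb).length_eq, List.length_append, pow_add]

lemma liouvilleFun_eq_or (n : ℕ) : liouvilleFun n = 1 ∨ liouvilleFun n = -1 := by
  unfold liouvilleFun
  rcases Nat.even_or_odd n.primeFactorsList.length with h | h
  · left; exact Even.neg_one_pow h
  · right; exact Odd.neg_one_pow h

theorem liouville_neg_infinitely_often_imp_pos (b c : ℤ)
    (h : {n : ℕ | 0 < n ∧ 0 < (n : ℤ) ^ 2 + b * n + c ∧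
      liouvilleFun ((n : ℤ) ^ 2 + b * n + c).toNat = -1}.Infinite) :
    {n : ℕ | 0 < n ∧ 0 < (n : ℤ) ^ 2 + b * n + c ∧
      liouvilleFun ((n : ℤ) ^ 2 + b * n + c).toNat = 1}.Infinite := by
  set f : ℤ → ℤ := fun x => x ^ 2 + b * x + c with hf
  -- positivity for large n
  have hpos : ∀ n : ℕ, (b.natAbs + c.natAbs + 1 : ℕ) ≤ n → 0 < f (n : ℤ) := by
    intro n hn
    have h1 : (b.natAbs + c.natAbs + 1 : ℤ) ≤ (n : ℤ) := by exact_mod_cast hn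
    have hb1 : -(b.natAbs : ℤ) ≤ b := by omega
    have hc1 : -(c.natAbs : ℤ) ≤ c := by omega
    have hn0 : (0:ℤ) ≤ n := Int.natCast_nonneg n
    simp only [hf]
    nlinarith [sq_nonneg ((n:ℤ) - b.natAbs - c.natAbs)]
  apply Set.infinite_of_forall_exists_gt
  intro a
  -- pick n from h with n large
  obtain ⟨n, hn, hna⟩ := h.exists_gt (max a (b.natAbs + c.natAbs + 1))
  obtain ⟨hn0, hfn, hLn⟩ := hn
  have hna' : a < n := lt_of_le_of_lt (le_max_left _ _) hna
  have hnN : b.natAbs + c.natAbs + 1 ≤ n := le_of_lt (lt_of_le_of_lt (le_max_right _ _) hna)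
  have hfn1 : 0 < f ((n : ℤ) + 1) := by
    have := hpos (n + 1) (by omega)
    simpa using this
  rcases liouvilleFun_eq_or (f ((n:ℤ)+1)).toNat with h1 | h1
  · -- n+1 works
    refine ⟨n + 1, ⟨by omega, ?_, ?_⟩, by omega⟩
    · push_cast; simpa [hf] using hfn1
    · push_cast; simpa [hf] using h1
  · -- use m = n + f(n)
    set m : ℤ := (n : ℤ) ^ 2 + (b + 1) * n + c with hm
    have hmn : (n : ℤ) < m := by simp only [hm, hf] at hfn ⊢; nlinarith
    have key : f m = f (n : ℤ) * f ((n : ℤ) + 1) := by simp only [hf, hm]; ring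
    have hfm : 0 < f m := by rw [key]; positivity
    refine ⟨m.toNat, ⟨?_, ?_, ?_⟩, ?_⟩
    · omega
    · rw [Int.toNat_of_nonneg (by omega : (0:ℤ) ≤ m)]; exact hfm
    · have hcast : ((m.toNat : ℤ) : ℤ) ^ 2 + b * m.toNat + c = f m := by
        rw [Int.toNat_of_nonneg (by omega : (0:ℤ) ≤ m)]
      rw [show ((m.toNat : ℤ)) ^ 2 + b * (m.toNat : ℤ) + c = f m by
        rw [Int.toNat_of_nonneg (by omega : (0:ℤ) ≤ m)]]
      have hfn' : 0 < f (n:ℤ) := hfn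
      have htn : (f m).toNat = (f (n:ℤ)).toNat * (f ((n:ℤ)+1)).toNat := by
        have hEq : ((f m).toNat : ℤ) = ((f (n:ℤ)).toNat : ℤ) * ((f ((n:ℤ)+1)).toNat : ℤ) := by
          rw [Int.toNat_of_nonneg hfm.le, Int.toNat_of_nonneg hfn'.le,
            Int.toNat_of_nonneg hfn1.le, key]
        exact_mod_cast hEq
      rw [htn, liouvilleFun_mul
        (by rw [Ne, Int.toNat_eq_zero]; exact not_le.mpr hfn')
        (by rw [Ne, Int.toNat_eq_zero]; exact not_le.mpr hfn1)]
      have hLn' : liouvilleFun (f (n:ℤ)).toNat = -1 := by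
        simpa [hf] using hLn
      rw [hLn', h1]; ring
    · have : (n:ℤ) < m.toNat := by omega
      omega
end

section
/- Let d be a positive integer that is not a perfect square, and suppose that the negative Pell equation x² − d·y² = −1 has no integer solution (equivalently, the fundamental unit associated to the discriminant 4d has norm +1). Then one of the following holds: (1) there exists a factorization d = a·b with 1 < a < b such that at least one of the equations a·x² − b·y² = 1 or a·x² − b·y² = −1 has an integer solution (x, y); or (2) d ≢ 1 (mod 4) and d ≢ 2 (mod 4), and there exists a factorization d = a·b with 1 ≤ a < b such that at least one of the equations a·x² − b·y² = 2 or a·x² − b·y² = −2 has an integer solution (x, y) with both x and y odd. -/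
lemma factor_split : ∀ y : ℕ, ∀ m n D : ℕ, 0 < m → 0 < n → Nat.Coprime m n →
    m * n = D * y ^ 2 →
    ∃ a u b v : ℕ, m = a * u ^ 2 ∧ n = b * v ^ 2 ∧ a * b = D := by
  intro y
  induction y using Nat.strong_induction_on with
  | _ y ih =>
    intro m n D hm hn hco heq
    rcases eq_or_ne y 0 with rfl | hy0
    · simp at heq; omega
    rcases eq_or_ne y 1 with rfl | hy1
    · exact ⟨m, 1, n, 1, by ring, by ring, by simpa using heq⟩
    obtain ⟨p, hp, hpy⟩ := Nat.exists_prime_and_dvd hy1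
    obtain ⟨y', rfl⟩ := hpy
    have hy' : y' ≠ 0 := by rintro rfl; simp at hy0
    have hylt : y' < p * y' := by
      have h2 := hp.two_le
      have : 2 * y' ≤ p * y' := Nat.mul_le_mul_right _ h2
      omega
    have hppos : 0 < p ^ 2 := pow_pos hp.pos 2
    have hp2 : p ^ 2 ∣ m * n := by
      rw [heq]; exact Dvd.dvd.mul_left ⟨y' ^ 2, by ring⟩ D
    have hpmn : p ∣ m * n := dvd_trans (dvd_pow_self p two_ne_zero) hp2
    rcases hp.dvd_mul.mp hpmn with hpm | hpn
    · have hpn' : ¬ p ∣ n := fun h =>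
        hp.one_lt.ne' (Nat.eq_one_of_dvd_coprimes hco hpm h ▸ rfl)
      have hcop : Nat.Coprime (p ^ 2) n :=
        (Nat.Prime.coprime_iff_not_dvd hp |>.mpr hpn').pow_left _
      have hp2m : p ^ 2 ∣ m := hcop.dvd_of_dvd_mul_right hp2
      obtain ⟨m', rfl⟩ := hp2m
      have hm' : 0 < m' := by
        rcases Nat.eq_zero_or_pos m' with rfl | h; · simp at hm
        exact h
      have hco' : Nat.Coprime m' n := hco.coprime_dvd_left ⟨p ^ 2, mul_comm _ _⟩
      have heq' : m' * n = D * y' ^ 2 := by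
        have : p ^ 2 * (m' * n) = p ^ 2 * (D * y' ^ 2) := by
          calc p ^ 2 * (m' * n) = p ^ 2 * m' * n := by ring
            _ = D * (p * y') ^ 2 := heq
            _ = p ^ 2 * (D * y' ^ 2) := by ring
        exact Nat.eq_of_mul_eq_mul_left hppos this
      obtain ⟨a, u, b, v, h1, h2, h3⟩ := ih y' hylt m' n D hm' hn hco' heq'
      exact ⟨a, p * u, b, v, by rw [h1]; ring, h2, h3⟩
    · have hpm' : ¬ p ∣ m := fun h =>
        hp.one_lt.ne' (Nat.eq_one_of_dvd_coprimes hco h hpn ▸ rfl)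
      have hcop : Nat.Coprime (p ^ 2) m :=
        (Nat.Prime.coprime_iff_not_dvd hp |>.mpr hpm').pow_left _
      have hp2n : p ^ 2 ∣ n := hcop.dvd_of_dvd_mul_left (mul_comm m n ▸ hp2)
      obtain ⟨n', rfl⟩ := hp2n
      have hn' : 0 < n' := by
        rcases Nat.eq_zero_or_pos n' with rfl | h; · simp at hn
        exact h
      have hco' : Nat.Coprime m n' := hco.coprime_dvd_right ⟨p ^ 2, mul_comm _ _⟩
      have heq' : m * n' = D * y' ^ 2 := by
        have : p ^ 2 * (m * n') = p ^ 2 * (D * y' ^ 2) := by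
          calc p ^ 2 * (m * n') = m * (p ^ 2 * n') := by ring
            _ = D * (p * y') ^ 2 := heq
            _ = p ^ 2 * (D * y' ^ 2) := by ring
        exact Nat.eq_of_mul_eq_mul_left hppos this
      obtain ⟨a, u, b, v, h1, h2, h3⟩ := ih y' hylt m n' D hm hn' hco' heq'
      exact ⟨a, u, b, p * v, h1, by rw [h2]; ring, h3⟩

theorem ambiguous_factorization_of_norm_pos (d : ℤ) (hd : 0 < d)
    (hsq : ¬ IsSquare d)
    (hpell : ¬ ∃ x y : ℤ, x ^ 2 - d * y ^ 2 = -1) :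
    (∃ a b : ℤ, d = a * b ∧ 1 < a ∧ a < b ∧
      ∃ x y : ℤ, a * x ^ 2 - b * y ^ 2 = 1 ∨ a * x ^ 2 - b * y ^ 2 = -1) ∨
    (d % 4 ≠ 1 ∧ d % 4 ≠ 2 ∧ ∃ a b : ℤ, d = a * b ∧ 1 ≤ a ∧ a < b ∧
      ∃ x y : ℤ, Odd x ∧ Odd y ∧
        (a * x ^ 2 - b * y ^ 2 = 2 ∨ a * x ^ 2 - b * y ^ 2 = -2)) := by
  classical
  lift d to ℕ using hd.le with D hDd
  have hDpos : 0 < D := by exact_mod_cast hd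
  have hDnsq : ¬ IsSquare D := by
    rintro ⟨r, hr⟩
    exact hsq ⟨(r : ℤ), by exact_mod_cast hr⟩
  -- minimal solution
  have hminsol : ∃ x0 y0 : ℕ, 0 < y0 ∧ (x0 : ℤ) ^ 2 - (D : ℤ) * (y0 : ℤ) ^ 2 = 1 ∧
      ∀ m, m < x0 → ¬ ∃ y : ℕ, 0 < y ∧ (m : ℤ) ^ 2 - (D : ℤ) * (y : ℤ) ^ 2 = 1 := by
    obtain ⟨x, y, hxy, hy⟩ := Pell.exists_of_not_isSquare hd hsq
    have hex : ∃ x : ℕ, ∃ y : ℕ, 0 < y ∧ (x : ℤ) ^ 2 - (D : ℤ) * (y : ℤ) ^ 2 = 1 := by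
      refine ⟨x.natAbs, y.natAbs, Int.natAbs_pos.mpr hy, ?_⟩
      have h1 := sq_abs x
      have h2 := sq_abs y
      rw [Int.abs_eq_natAbs] at h1 h2
      rw [h1, h2]; exact hxy
    obtain ⟨y0, hy0, heq0⟩ := Nat.find_spec hex
    exact ⟨Nat.find hex, y0, hy0, heq0, fun m h => Nat.find_min hex h⟩
  obtain ⟨x0, y0, hy0, heq0, hmin⟩ := hminsol
  have hnat : x0 ^ 2 = D * y0 ^ 2 + 1 := by
    have : ((x0 ^ 2 : ℕ) : ℤ) = ((D * y0 ^ 2 + 1 : ℕ) : ℤ) := by push_cast; linarith [heq0]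
    exact_mod_cast this
  have hx2 : 2 ≤ x0 := by nlinarith [hy0, hDpos, hnat]
  rcases Nat.even_or_odd x0 with ⟨k, hk⟩ | ⟨k, hk⟩
  · -- x0 = 2k even : case d ≡ 3 mod 4, equation ±2
    have hk1 : 1 ≤ k := by omega
    have hkk : x0 = 2 * k := by omega
    have hmn : (2 * k - 1) * (2 * k + 1) = D * y0 ^ 2 := by
      have hcast : ((2 * k - 1 : ℕ) : ℤ) = 2 * (k : ℤ) - 1 := by omega
      have : ((2 * k - 1 : ℕ) : ℤ) * ((2 * k + 1 : ℕ) : ℤ) = (D : ℤ) * (y0 : ℤ) ^ 2 := by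
        rw [hcast]
        push_cast
        have hxk : (x0 : ℤ) = 2 * k := by exact_mod_cast hkk
        nlinarith [heq0, hxk]
      exact_mod_cast this
    have hodd : Odd (2 * k - 1) := by
      refine Nat.odd_iff.mpr ?_; omega
    have hcop : Nat.Coprime (2 * k - 1) (2 * k + 1) := by
      have h2 : Nat.gcd (2 * k - 1) (2 * k + 1) ∣ 2 := by
        have := Nat.dvd_sub (Nat.gcd_dvd_right (2 * k - 1) (2 * k + 1))
          (Nat.gcd_dvd_left (2 * k - 1) (2 * k + 1))
        simpa [show 2 * k + 1 - (2 * k - 1) = 2 by omega] using this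
      have h1 : Nat.gcd (2 * k - 1) (2 * k + 1) ∣ 2 * k - 1 := Nat.gcd_dvd_left _ _
      rcases (Nat.le_of_dvd (by norm_num) h2).lt_or_eq with h | h
      · interval_cases h' : Nat.gcd (2 * k - 1) (2 * k + 1)
        · exfalso; have := Nat.eq_zero_of_gcd_eq_zero_left h'; omega
        · exact h'
      · exfalso
        rw [h] at h1
        rw [Nat.odd_iff] at hodd
        omega
    obtain ⟨a, u, b, v, h1, h2, h3⟩ := factor_split y0 (2 * k - 1) (2 * k + 1) D
      (by omega) (by omega) hcop hmn
    have hapos : 0 < a := by by_contra h; push_neg at h; interval_cases a <;> omega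
    have hupos : 0 < u := by
      rcases Nat.eq_zero_or_pos u with rfl | h; · simp at h1; omega
      exact h
    have hbpos : 0 < b := by
      rcases Nat.eq_zero_or_pos b with rfl | h; · simp at h2
      exact h
    have hvpos : 0 < v := by
      rcases Nat.eq_zero_or_pos v with rfl | h; · simp at h2
      exact h
    have huodd : Odd u := by
      rcases Nat.even_or_odd u with ⟨t, ht⟩ | h
      · exfalso; rw [Nat.odd_iff] at hodd; subst ht
        have : (2 : ℕ) ∣ 2 * k - 1 := ⟨2 * a * t ^ 2, by rw [h1]; ring⟩
        omega
      · exact h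
    have hvodd : Odd v := by
      rcases Nat.even_or_odd v with ⟨t, ht⟩ | h
      · exfalso; subst ht
        have : (2 : ℕ) ∣ 2 * k + 1 := ⟨2 * b * t ^ 2, by rw [h2]; ring⟩
        omega
      · exact h
    have hane : a ≠ b := by
      rintro rfl
      exact hDnsq ⟨a, by rw [← h3]⟩
    have hDmod : D % 4 = 3 := by
      rcases Nat.even_or_odd y0 with ⟨s, hs⟩ | hs
      · exfalso
        have hexp : D * y0 ^ 2 = 4 * (D * s ^ 2) := by subst hs; ring
        rw [hkk] at hnat
        have h4k : (2 * k) ^ 2 = 4 * k ^ 2 := by ring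
        omega
      · obtain ⟨s, hs⟩ := hs
        have hexp : D * y0 ^ 2 = 4 * (D * (s ^ 2 + s)) + D := by subst hs; ring
        rw [hkk] at hnat
        have h4k : (2 * k) ^ 2 = 4 * k ^ 2 := by ring
        omega
    have heqz : (b : ℤ) * (v : ℤ) ^ 2 - (a : ℤ) * (u : ℤ) ^ 2 = 2 := by
      have e1 : ((a * u ^ 2 : ℕ) : ℤ) = 2 * (k : ℤ) - 1 := by
        rw [← h1]; omega
      have e2 : ((b * v ^ 2 : ℕ) : ℤ) = 2 * (k : ℤ) + 1 := by
        rw [← h2]; omega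
      push_cast at e1 e2
      linarith
    right
    refine ⟨by omega, by omega, ?_⟩
    rcases lt_trichotomy a b with h | h | h
    · exact ⟨(a : ℤ), (b : ℤ), by exact_mod_cast h3.symm, by exact_mod_cast hapos,
        by exact_mod_cast h, (u : ℤ), (v : ℤ), by exact_mod_cast huodd,
        by exact_mod_cast hvodd, Or.inr (by linarith)⟩
    · exact absurd h hane
    · exact ⟨(b : ℤ), (a : ℤ), by rw [← h3]; push_cast; ring, by exact_mod_cast hbpos,
        by exact_mod_cast h, (v : ℤ), (u : ℤ), by exact_mod_cast hvodd,
        by exact_mod_cast huodd, Or.inl (by linarith)⟩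
  · -- x0 = 2k+1 odd
    have hk1 : 1 ≤ k := by omega
    have hkk : x0 = 2 * k + 1 := by omega
    have hmain : 4 * (k * (k + 1)) = D * y0 ^ 2 := by
      rw [hkk] at hnat
      have : (2 * k + 1) ^ 2 = 4 * (k * (k + 1)) + 1 := by ring
      omega
    have hcop : Nat.Coprime k (k + 1) := by
      have : Nat.gcd k (k + 1) = Nat.gcd k 1 := by
        simpa using Nat.gcd_add_self_right k 1
      simpa [Nat.Coprime] using this
    rcases Nat.even_or_odd y0 with ⟨j, hj⟩ | hyodd
    · -- y0 = 2j even : equation ±1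
      have hj0 : 0 < j := by omega
      have hmn : k * (k + 1) = D * j ^ 2 := by
        have : D * y0 ^ 2 = 4 * (D * j ^ 2) := by subst hj; ring
        omega
      obtain ⟨a, u, b, v, h1, h2, h3⟩ := factor_split j k (k + 1) D
        (by omega) (by omega) hcop hmn
      have hapos : 0 < a := by
        rcases Nat.eq_zero_or_pos a with rfl | h; · simp at h1; omega
        exact h
      have hupos : 0 < u := by
        rcases Nat.eq_zero_or_pos u with rfl | h; · simp at h1; omega
        exact h
      have hbpos : 0 < b := by
        rcases Nat.eq_zero_or_pos b with rfl | h; · simp at h2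
        exact h
      have hvpos : 0 < v := by
        rcases Nat.eq_zero_or_pos v with rfl | h; · simp at h2
        exact h
      have hane : a ≠ b := by
        rintro rfl
        exact hDnsq ⟨a, by rw [← h3]⟩
      -- exclude a = 1
      have ha1 : a ≠ 1 := by
        rintro rfl
        rw [one_mul] at h3
        subst h3
        refine hpell ⟨(u : ℤ), (v : ℤ), ?_⟩
        have e1 : ((1 * u ^ 2 : ℕ) : ℤ) = (k : ℤ) := by rw [← h1]
        have e2 : ((b * v ^ 2 : ℕ) : ℤ) = (k : ℤ) + 1 := by rw [← h2]; push_cast; ring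
        push_cast at e1 e2
        linarith
      -- exclude b = 1
      have hb1 : b ≠ 1 := by
        rintro rfl
        rw [mul_one] at h3
        subst h3
        have hvx : v < x0 := by
          have hv2 : v ^ 2 = k + 1 := by linarith [h2]
          have hle : v ≤ v ^ 2 := Nat.le_self_pow two_ne_zero v
          omega
        refine hmin v hvx ⟨u, hupos, ?_⟩
        have e1 : ((a * u ^ 2 : ℕ) : ℤ) = (k : ℤ) := by rw [← h1]
        have e2 : ((1 * v ^ 2 : ℕ) : ℤ) = (k : ℤ) + 1 := by rw [← h2]; push_cast; ring
        push_cast at e1 e2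
        linarith
      have heqz : (b : ℤ) * (v : ℤ) ^ 2 - (a : ℤ) * (u : ℤ) ^ 2 = 1 := by
        have e1 : ((a * u ^ 2 : ℕ) : ℤ) = (k : ℤ) := by rw [← h1]
        have e2 : ((b * v ^ 2 : ℕ) : ℤ) = (k : ℤ) + 1 := by rw [← h2]; push_cast; ring
        push_cast at e1 e2
        linarith
      left
      rcases lt_trichotomy a b with h | h | h
      · exact ⟨(a : ℤ), (b : ℤ), by exact_mod_cast h3.symm, by
          have : 1 < a := by omega
          exact_mod_cast this, by exact_mod_cast h, (u : ℤ), (v : ℤ),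
          Or.inr (by linarith)⟩
      · exact absurd h hane
      · exact ⟨(b : ℤ), (a : ℤ), by rw [← h3]; push_cast; ring, by
          have : 1 < b := by omega
          exact_mod_cast this, by exact_mod_cast h, (v : ℤ), (u : ℤ),
          Or.inl (by linarith)⟩
    · -- y0 odd : 4 ∣ D, equation ±2
      have h4D : 4 ∣ D := by
        have hco4 : Nat.Coprime 4 (y0 ^ 2) := by
          have h2y : Nat.Coprime 2 y0 :=
            (Nat.prime_two.coprime_iff_not_dvd).mpr
              (by rw [Nat.odd_iff] at hyodd; omega)
          have h4 : Nat.Coprime (2 ^ 2) (y0 ^ 2) := h2y.pow 2 2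
          simpa using h4
        exact hco4.dvd_of_dvd_mul_right ⟨k * (k + 1), by omega⟩
      obtain ⟨D', hD'⟩ := h4D
      have hD'pos : 0 < D' := by omega
      have hmn : k * (k + 1) = D' * y0 ^ 2 := by
        subst hD'
        have : 4 * (D' * y0 ^ 2) = 4 * D' * y0 ^ 2 := by ring
        omega
      obtain ⟨a, u, b, v, h1, h2, h3⟩ := factor_split y0 k (k + 1) D'
        (by omega) (by omega) hcop hmn
      have hapos : 0 < a := by
        rcases Nat.eq_zero_or_pos a with rfl | h; · simp at h1; omega
        exact h
      have hbpos : 0 < b := by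
        rcases Nat.eq_zero_or_pos b with rfl | h; · simp at h2
        exact h
      -- u*v = y0 hence both odd
      have huv : u * v = y0 := by
        have hsq : (u * v) ^ 2 = y0 ^ 2 := by
          have habpos : 0 < a * b := Nat.mul_pos hapos hbpos
          have : (a * b) * (u * v) ^ 2 = (a * b) * y0 ^ 2 := by
            calc (a * b) * (u * v) ^ 2 = (a * u ^ 2) * (b * v ^ 2) := by ring
              _ = k * (k + 1) := by rw [← h1, ← h2]
              _ = D' * y0 ^ 2 := hmn
              _ = (a * b) * y0 ^ 2 := by rw [h3]
          exact Nat.eq_of_mul_eq_mul_left habpos this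
        exact Nat.pow_left_injective (by norm_num) hsq
      have huvodd : Odd u ∧ Odd v := by
        rw [← huv] at hyodd
        exact (Nat.odd_mul).mp hyodd
      have hane : (2 * a) ≠ (2 * b) := by
        intro h
        have : a = b := by omega
        subst this
        exact hDnsq ⟨2 * a, by rw [hD', ← h3]; ring⟩
      have heqz : (2 * b : ℤ) * (v : ℤ) ^ 2 - (2 * a : ℤ) * (u : ℤ) ^ 2 = 2 := by
        have e1 : ((a * u ^ 2 : ℕ) : ℤ) = (k : ℤ) := by rw [← h1]
        have e2 : ((b * v ^ 2 : ℕ) : ℤ) = (k : ℤ) + 1 := by rw [← h2]; push_cast; ring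
        push_cast at e1 e2
        linarith
      right
      refine ⟨by omega, by omega, ?_⟩
      rcases lt_trichotomy a b with h | h | h
      · refine ⟨(2 * a : ℤ), (2 * b : ℤ), by rw [hD', ← h3]; push_cast; ring, by
          push_cast; omega, by push_cast; omega, (u : ℤ), (v : ℤ),
          by exact_mod_cast huvodd.1, by exact_mod_cast huvodd.2,
          Or.inr (by push_cast; push_cast at heqz; linarith)⟩
      · exact absurd (by omega : 2 * a = 2 * b) hane
      · refine ⟨(2 * b : ℤ), (2 * a : ℤ), by rw [hD', ← h3]; push_cast; ring, by
          push_cast; omega, by push_cast; omega, (v : ℤ), (u : ℤ),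
          by exact_mod_cast huvodd.2, by exact_mod_cast huvodd.1,
          Or.inl (by push_cast; push_cast at heqz; linarith)⟩
end

section
/- For every prime p with p ≡ 3 (mod 4), there exist primes e₁ and e₂ with e₁ ≡ 3 (mod 4) and e₂ ≡ 1 (mod 4) such that the Legendre symbols satisfy (p/e₁) = 1, (p/e₂) = 1, and (e₁/e₂) = −1. -/
/-!
By Dirichlet's theorem and the Chinese remainder theorem, a prime can be chosen in any unit
residue class modulo `m` while being a quadratic nonresidue modulo a prime `q ∤ 2m`. Take
`e₁ ≡ 3 (mod 4)` a nonresidue mod `p`; since `p ≡ e₁ ≡ 3 (mod 4)`, reciprocity flips the sign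
and `(p/e₁) = 1`. Then take `e₂ ≡ 1 (mod 4p)` a nonresidue mod `e₁`: as `e₂ ≡ 1 (mod 4)`,
`(p/e₂) = (e₂/p) = (1/p) = 1` and `(e₁/e₂) = (e₂/e₁) = -1`.
-/

theorem Nat.exists_prime_natCast_eq_and_natCast_eq {m n : ℕ} [NeZero m] [NeZero n]
    (hmn : m.Coprime n) {u : ZMod m} {v : ZMod n} (hu : IsUnit u) (hv : IsUnit v) :
    ∃ e : ℕ, e.Prime ∧ (e : ZMod m) = u ∧ (e : ZMod n) = v := by
  let C := ZMod.chineseRemainder hmn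
  obtain ⟨e, -, he, heC⟩ :=
    Nat.forall_exists_prime_gt_and_eq_mod
      (((Prod.isUnit_iff (x := (u, v))).2 ⟨hu, hv⟩).map C.symm) 0
  have hcast : ((e : ZMod m), (e : ZMod n)) = (u, v) := by
    rw [← C.apply_symm_apply (u, v), ← heC, map_natCast]
    rfl
  exact ⟨e, he, Prod.ext_iff.1 hcast⟩

theorem Nat.exists_prime_natCast_eq_and_jacobiSym_eq_neg_one {m q : ℕ} [NeZero m]
    [Fact q.Prime] (hq : q ≠ 2) (hmq : m.Coprime q) {u : ZMod m} (hu : IsUnit u) :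
    ∃ e : ℕ, e.Prime ∧ (e : ZMod m) = u ∧ jacobiSym e q = -1 := by
  obtain ⟨v, hv⟩ := FiniteField.exists_nonsquare (F := ZMod q) (by rwa [ZMod.ringChar_zmod_n])
  have hv0 : v ≠ 0 := by
    rintro rfl
    exact hv IsSquare.zero
  obtain ⟨e, he, hem, heq⟩ := Nat.exists_prime_natCast_eq_and_natCast_eq hmq hu hv0.isUnit
  refine ⟨e, he, hem, ?_⟩
  rw [← jacobiSym.legendreSym.to_jacobiSym, legendreSym.eq_neg_one_iff', heq]
  exact hv

theorem exists_primes_e1_e2 (p : ℕ) (hp : p.Prime) (hp4 : p % 4 = 3) :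
    ∃ e₁ e₂ : ℕ, e₁.Prime ∧ e₂.Prime ∧ e₁ % 4 = 3 ∧ e₂ % 4 = 1 ∧
      jacobiSym (p : ℤ) e₁ = 1 ∧ jacobiSym (p : ℤ) e₂ = 1 ∧
      jacobiSym (e₁ : ℤ) e₂ = -1 := by
  have : Fact p.Prime := ⟨hp⟩
  have hp2 : p ≠ 2 := by omega
  obtain ⟨e₁, he₁, he₁3, he₁p⟩ := Nat.exists_prime_natCast_eq_and_jacobiSym_eq_neg_one (m := 4)
    hp2 ((Nat.coprime_two_left.2 (hp.odd_of_ne_two hp2)).pow_left 2) (u := 3) (by decide)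
  have : Fact e₁.Prime := ⟨he₁⟩
  have he₁4 : e₁ % 4 = 3 := by rw [← ZMod.val_natCast, he₁3]; rfl
  have he₁odd : Odd e₁ := Nat.odd_iff.2 (by omega)
  have hpe₁ : p ≠ e₁ := by
    rintro rfl
    rw [jacobiSym.mod_left, Int.emod_self, jacobiSym.zero_left hp.one_lt] at he₁p
    exact absurd he₁p (by decide)
  obtain ⟨e₂, he₂, he₂1, he₂e₁⟩ := Nat.exists_prime_natCast_eq_and_jacobiSym_eq_neg_one
    (m := 4 * p) (by omega)
    (((Nat.coprime_two_left.2 he₁odd).pow_left 2).mul_left ((Nat.coprime_primes hp he₁).2 hpe₁))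
    isUnit_one
  have he₂mod : e₂ ≡ 1 [MOD 4 * p] :=
    (ZMod.natCast_eq_natCast_iff _ _ _).1 (he₂1.trans Nat.cast_one.symm)
  have he₂4 : e₂ % 4 = 1 := he₂mod.of_mul_right p
  refine ⟨e₁, e₂, he₁, he₂, he₁4, he₂4, ?_, ?_, ?_⟩
  · rw [jacobiSym.quadratic_reciprocity_three_mod_four hp4 he₁4, he₁p, neg_neg]
  · rw [jacobiSym.quadratic_reciprocity_one_mod_four' (hp.odd_of_ne_two hp2) he₂4,
      jacobiSym.mod_left' (Int.natCast_modEq_iff.2 (he₂mod.of_mul_left 4)), Nat.cast_one,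
      jacobiSym.one_left]
  · rw [jacobiSym.quadratic_reciprocity_one_mod_four' he₁odd he₂4, he₂e₁]
end

section
/- Let p₁, …, p_r be distinct odd primes, let ε₁, …, ε_r ∈ {1, −1} be arbitrary signs, and let a be an odd integer. Then there exists a prime q with q ≡ a (mod 8), q different from each pᵢ, such that the Legendre symbol (pᵢ/q) equals εᵢ for every i = 1, …, r. -/
/-!
By quadratic reciprocity, `(pᵢ / q) = ±(q / pᵢ)`, where the sign depends only on `pᵢ` and on
`q mod 4 = a mod 4`. So it suffices to prescribe the residue of `q` modulo each `pᵢ`, to be a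
nonzero class of the appropriate quadratic character, together with `q ≡ a (mod 8)`. By the
Chinese remainder theorem this is one unit residue class modulo `8 ∏ pᵢ`, which contains
arbitrarily large primes by Dirichlet's theorem.
-/

open Function
open scoped NumberTheorySymbols

theorem quadraticChar_exists_isUnit_eq {F : Type*} [Field F] [Fintype F] [DecidableEq F]
    (hF : ringChar F ≠ 2) {t : ℤ} (ht : IsUnit t) :
    ∃ c : F, IsUnit c ∧ quadraticChar F c = t := by
  obtain ⟨c, hc⟩ : ∃ c : F, quadraticChar F c = t := by
    rcases Int.isUnit_iff.mp ht with rfl | rfl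
    · exact ⟨1, map_one _⟩
    · exact quadraticChar_exists_neg_one hF
  refine ⟨c, isUnit_iff_ne_zero.mpr fun h0 => ht.ne_zero ?_, hc⟩
  rw [← hc, h0, quadraticChar_zero]

theorem ZMod.isUnit_intCast_two_pow_of_odd (k : ℕ) {a : ℤ} (ha : Odd a) :
    IsUnit (a : ZMod (2 ^ k)) := by
  have h2 : IsCoprime (2 : ℤ) a :=
    (Prime.coprime_iff_not_dvd Int.prime_two).mpr <| by
      rwa [← even_iff_two_dvd, Int.not_even_iff_odd]
  rw [ZMod.coe_int_isUnit_iff_isCoprime]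
  exact_mod_cast h2.pow_left (m := k)

theorem Nat.exists_prime_gt_and_natCast_eq_of_coprime {ι : Type*} [Fintype ι]
    {n : ℕ} [NeZero n] {m : ι → ℕ} [∀ i, NeZero (m i)]
    (hm : Pairwise (Coprime on m)) (hnm : ∀ i, n.Coprime (m i))
    {u : ZMod n} (hu : IsUnit u) {v : ∀ i, ZMod (m i)} (hv : ∀ i, IsUnit (v i)) (k : ℕ) :
    ∃ q > k, q.Prime ∧ (q : ZMod n) = u ∧ ∀ i, (q : ZMod (m i)) = v i := by
  have hcop : n.Coprime (∏ i, m i) := Nat.Coprime.prod_right fun i _ => hnm i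
  have : NeZero (n * ∏ i, m i) :=
    ⟨mul_ne_zero (NeZero.ne n) (Finset.prod_ne_zero_iff.mpr fun i _ => NeZero.ne (m i))⟩
  let e : ZMod (n * ∏ i, m i) ≃+* ZMod n × ∀ i, ZMod (m i) :=
    (ZMod.chineseRemainder hcop).trans ((RingEquiv.refl _).prodCongr (ZMod.prodEquivPi m hm))
  have hb : IsUnit (e.symm (u, v)) :=
    (Prod.isUnit_iff.mpr ⟨hu, Pi.isUnit_iff.mpr hv⟩).map e.symm
  obtain ⟨q, hqk, hq, hqb⟩ := Nat.forall_exists_prime_gt_and_eq_mod hb k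
  have hquv : ((q : ZMod n), fun i => (q : ZMod (m i))) = (u, v) := by
    rw [← e.apply_symm_apply (u, v), ← hqb, map_natCast]
    rfl
  simp only [Prod.mk.injEq, funext_iff] at hquv
  exact ⟨q, hqk, hq, hquv⟩

theorem jacobiSym_eq_of_emod_four_eq {p q : ℕ} {a ε : ℤ} (hp : p % 2 = 1) (hq : q % 2 = 1)
    (hqa : (q : ℤ) % 4 = a % 4)
    (h : J(q | p) = (if a % 4 = 3 ∧ p % 4 = 3 then -1 else 1) * ε) : J(p | q) = ε := by
  rw [← jacobiSym.quadratic_reciprocity_if hp hq, h]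
  have : q % 4 = 3 ↔ a % 4 = 3 := by omega
  split_ifs <;> simp_all

theorem exists_prime_with_prescribed_legendre_symbols (r : ℕ)
    (p : Fin r → ℕ) (hp : ∀ i, (p i).Prime) (hodd : ∀ i, p i ≠ 2)
    (hinj : Function.Injective p)
    (ε : Fin r → ℤ) (hε : ∀ i, ε i = 1 ∨ ε i = -1)
    (a : ℤ) (ha : Odd a) :
    ∃ q : ℕ, q.Prime ∧ (q : ℤ) % 8 = a % 8 ∧ (∀ i, q ≠ p i) ∧
      ∀ i, jacobiSym (p i : ℤ) q = ε i := by
  have : ∀ i, Fact (p i).Prime := fun i => ⟨hp i⟩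
  have hpodd : ∀ i, Odd (p i) := fun i => (hp i).odd_of_ne_two (hodd i)
  choose c hcu hc using fun i => quadraticChar_exists_isUnit_eq (F := ZMod (p i))
    (t := (if a % 4 = 3 ∧ p i % 4 = 3 then -1 else 1) * ε i)
    (by rw [ZMod.ringChar_zmod_n]; exact hodd i)
    (by rcases hε i with h | h <;> split_ifs <;> simp [h])
  obtain ⟨q, hqN, hq, hqa, hqc⟩ := Nat.exists_prime_gt_and_natCast_eq_of_coprime (n := 2 ^ 3)
    (fun i j hij => (Nat.coprime_primes (hp i) (hp j)).mpr (hinj.ne hij))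
    (fun i => (Nat.coprime_two_left.mpr (hpodd i)).pow_left 3)
    (ZMod.isUnit_intCast_two_pow_of_odd 3 ha) hcu (∏ i, p i)
  have hq8 : (q : ℤ) % 8 = a % 8 := by
    have := (ZMod.intCast_eq_intCast_iff' q a (2 ^ 3)).mp (by exact_mod_cast hqa)
    norm_num at this
    exact this
  have hq2 : q % 2 = 1 := by have := Int.odd_iff.mp ha; omega
  have hpq : ∀ i, p i < q := fun i =>
    (Nat.le_of_dvd (Finset.prod_pos fun j _ => (hp j).pos) (Finset.dvd_prod_of_mem p
      (Finset.mem_univ i))).trans_lt hqN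
  refine ⟨q, hq, hq8, fun i => (hpq i).ne', fun i => ?_⟩
  refine jacobiSym_eq_of_emod_four_eq (a := a) (Nat.odd_iff.mp (hpodd i)) hq2 (by omega) ?_
  rw [← jacobiSym.legendreSym.to_jacobiSym, legendreSym, Int.cast_natCast, hqc, hc]
end

section
/- For every prime p, there are infinitely many positive integers n such that λ(n² + p) = −1. -/
open ArithmeticFunction ArithmeticFunction.Omega

lemma liouvilleFun_eq_neg_one_pow_cardFactors (n : ℕ) : liouvilleFun n = (-1) ^ Ω n := by
  rw [liouvilleFun, cardFactors_apply]

lemma liouvilleFun_mul_s13 {m n : ℕ} (hm : m ≠ 0) (hn : n ≠ 0) :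
    liouvilleFun (m * n) = liouvilleFun m * liouvilleFun n := by
  simp only [liouvilleFun_eq_neg_one_pow_cardFactors, cardFactors_mul hm hn, pow_add]

lemma liouvilleFun_prime {p : ℕ} (hp : p.Prime) : liouvilleFun p = -1 := by
  rw [liouvilleFun_eq_neg_one_pow_cardFactors, cardFactors_apply_prime hp, pow_one]

lemma liouvilleFun_sq (n : ℕ) : liouvilleFun (n ^ 2) = 1 := by
  rcases eq_or_ne n 0 with rfl | hn
  · simp [liouvilleFun]
  rw [sq, liouvilleFun_mul_s13 hn hn, liouvilleFun_eq_neg_one_pow_cardFactors, ← pow_add]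
  exact Even.neg_one_pow ⟨_, rfl⟩

lemma liouvilleFun_prime_mul_sq {p n : ℕ} (hp : p.Prime) (hn : n ≠ 0) :
    liouvilleFun (p * n ^ 2) = -1 := by
  rw [liouvilleFun_mul_s13 hp.ne_zero (pow_ne_zero 2 hn), liouvilleFun_prime hp, liouvilleFun_sq,
    mul_one]

theorem Pell.exists_nat_solution_y_gt {d : ℕ} (h₀ : 0 < d) (hd : ¬IsSquare d) (N : ℕ) :
    ∃ x y : ℕ, N < y ∧ x ^ 2 = 1 + d * y ^ 2 := by
  obtain ⟨a₁, ha₁⟩ := IsFundamental.exists_of_not_isSquare (d := d)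
    (mod_cast h₀) (mt Int.isSquare_natCast_iff.mp hd)
  obtain ⟨_, ⟨k, rfl⟩, hk : (N : ℤ) < (a₁ ^ k).y⟩ := not_bddAbove_iff.mp
    ha₁.y_strictMono.not_bddAbove_range_of_isSuccArchimedean N
  refine ⟨(a₁ ^ k).x.natAbs, (a₁ ^ k).y.natAbs, by omega, ?_⟩
  zify [sq_abs]
  exact (a₁ ^ k).prop_x

theorem liouville_neg_infinitely_often_sq_add_prime (p : ℕ) (hp : p.Prime) :
    {n : ℕ | 0 < n ∧ liouvilleFun (n ^ 2 + p) = -1}.Infinite := by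
  refine Set.infinite_of_forall_exists_gt fun N => ?_
  obtain ⟨x, y, hy, hpell⟩ := Pell.exists_nat_solution_y_gt hp.pos hp.prime.not_isSquare N
  have hx : x ≠ 0 := by rintro rfl; simp at hpell; omega
  have hsq : (p * y) ^ 2 + p = p * x ^ 2 := by rw [hpell]; ring
  refine ⟨p * y, ⟨Nat.mul_pos hp.pos (by omega), ?_⟩,
    hy.trans_le (Nat.le_mul_of_pos_left y hp.pos)⟩
  rw [hsq]
  exact liouvilleFun_prime_mul_sq hp hx
end

section
/- For every prime p with p ≡ 1 (mod 4), there are infinitely many positive integers n such that n² − p > 0 and λ(n² − p) = −1. -/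
open ArithmeticFunction

lemma liouvilleFun_eq_liouville {n : ℕ} (hn : n ≠ 0) : liouvilleFun n = liouville n := by
  rw [liouville_apply hn, cardFactors_apply, liouvilleFun]

lemma liouville_eq_one_or_eq_neg_one {n : ℕ} (hn : n ≠ 0) :
    liouville n = 1 ∨ liouville n = -1 := by
  rw [liouville_apply hn]
  exact neg_one_pow_eq_or ℤ _

lemma liouville_sq {a : ℕ} (ha : a ≠ 0) : liouville (a ^ 2) = 1 := by
  rw [liouville_apply (pow_ne_zero 2 ha), cardFactors_pow, pow_mul]
  norm_num

lemma liouville_prime {p : ℕ} (hp : p.Prime) : liouville p = -1 := by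
  rw [liouville_apply hp.ne_zero, cardFactors_apply_prime hp, pow_one]

lemma add_sq_sub_sq_sub {p n : ℕ} (h : p ≤ n ^ 2) :
    (n + (n ^ 2 - p)) ^ 2 - p = (n ^ 2 - p) * ((n + 1) ^ 2 - p) := by
  have h₁ : p ≤ (n + 1) ^ 2 := h.trans (Nat.pow_le_pow_left (by omega) 2)
  have h₂ : p ≤ (n + (n ^ 2 - p)) ^ 2 := h.trans (Nat.pow_le_pow_left (by omega) 2)
  zify [h, h₁, h₂]
  ring

lemma exists_gt_liouville_sq_sub_eq_neg_one {p n : ℕ} (hpn : p < n ^ 2)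
    (hn : liouville (n ^ 2 - p) = -1) :
    ∃ m, n < m ∧ p < m ^ 2 ∧ liouville (m ^ 2 - p) = -1 := by
  have hsucc : n ^ 2 < (n + 1) ^ 2 := Nat.pow_lt_pow_left (by omega) (by norm_num)
  rcases liouville_eq_one_or_eq_neg_one (n := (n + 1) ^ 2 - p) (by omega) with h | h
  · refine ⟨n + (n ^ 2 - p), by omega, hpn.trans_le (Nat.pow_le_pow_left (by omega) 2), ?_⟩
    rw [add_sq_sub_sq_sub hpn.le, liouville_apply_mul, hn, h, mul_one]
  · exact ⟨n + 1, by omega, by omega, h⟩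

lemma Set.infinite_of_nonempty_of_forall_exists_gt {α : Type*} [LinearOrder α] {s : Set α} (hs : s.Nonempty)
    (h : ∀ n ∈ s, ∃ m ∈ s, n < m) : s.Infinite := by
  intro hfin
  obtain ⟨n, hn, hmax⟩ := Set.exists_max_image s id hfin hs
  obtain ⟨m, hm, hnm⟩ := h n hn
  exact absurd (hmax m hm) (not_le.mpr hnm)

lemma infinite_setOf_liouville_sq_sub_eq_neg_one {p n : ℕ} (hpn : p < n ^ 2)
    (hn : liouville (n ^ 2 - p) = -1) :
    {m : ℕ | p < m ^ 2 ∧ liouville (m ^ 2 - p) = -1}.Infinite :=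
  Set.infinite_of_nonempty_of_forall_exists_gt ⟨n, hpn, hn⟩ fun _ ⟨hpm, hm⟩ ↦
    let ⟨k, hmk, hk⟩ := exists_gt_liouville_sq_sub_eq_neg_one hpm hm
    ⟨k, hk, hmk⟩

lemma Nat.Coprime.exists_eq_mul_sq_of_mul_eq_mul_sq {d u v w : ℕ} (huv : u.Coprime v)
    (hd : d ≠ 0) (hdu : d ∣ u) (h : u * v = d * w ^ 2) :
    ∃ a b, u = d * a ^ 2 ∧ v = b ^ 2 := by
  obtain ⟨u', rfl⟩ := hdu
  have hu'v : u' * v = w ^ 2 := by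
    apply Nat.eq_of_mul_eq_mul_left (Nat.pos_of_ne_zero hd)
    rw [← h, mul_assoc]
  have hcop : u'.Coprime v := huv.coprime_dvd_left (Dvd.intro_left d rfl)
  obtain ⟨a, ha⟩ := exists_eq_pow_of_mul_eq_pow (Nat.isUnit_iff.mpr hcop) hu'v
  obtain ⟨b, hb⟩ := exists_eq_pow_of_mul_eq_pow (Nat.isUnit_iff.mpr hcop.symm)
    ((mul_comm v u').trans hu'v)
  exact ⟨a, b, by rw [ha], hb⟩

lemma exists_eq_two_mul_add_one_and_eq_two_mul {p x y : ℕ} (hp4 : p % 4 = 1)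
    (h : x ^ 2 = 1 + p * y ^ 2) : ∃ t w, x = 2 * t + 1 ∧ y = 2 * w := by
  have h4 := congrArg (· % 4) h
  rw [Nat.add_mod, Nat.mul_mod, Nat.pow_mod, Nat.pow_mod y, hp4] at h4
  have hx := Nat.mod_lt x (show 4 > 0 by norm_num)
  have hy := Nat.mod_lt y (show 4 > 0 by norm_num)
  refine ⟨x / 2, y / 2, ?_, ?_⟩ <;>
  interval_cases hx' : x % 4 <;> interval_cases hy' : y % 4 <;> simp at h4 <;> omega

lemma exists_sq_add_one_eq_mul_sq_of_sq_eq_one_add_mul_sq {p x y : ℕ} (hp : p.Prime)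
    (hp4 : p % 4 = 1) (hy : 0 < y) (h : x ^ 2 = 1 + p * y ^ 2) :
    ∃ a b, 0 < b ∧ a ^ 2 + 1 = p * b ^ 2 := by
  induction y using Nat.strong_induction_on generalizing x with
  | _ y ih =>
  obtain ⟨t, w, rfl, rfl⟩ := exists_eq_two_mul_add_one_and_eq_two_mul hp4 h
  have htw : t * (t + 1) = p * w ^ 2 := by nlinarith
  have hcop : t.Coprime (t + 1) := Nat.coprime_self_add_right.mpr (Nat.coprime_one_right t)
  rcases hp.dvd_mul.mp ⟨w ^ 2, htw⟩ with hpt | hpt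
  · obtain ⟨a, b, rfl, hb⟩ := hcop.exists_eq_mul_sq_of_mul_eq_mul_sq hp.ne_zero hpt htw
    have ha : 0 < a := by
      have hpw : 0 < p * w ^ 2 := Nat.mul_pos hp.pos (pow_pos (by omega) 2)
      rw [← htw] at hpw
      exact Nat.pos_of_ne_zero fun h0 ↦ by simp [h0] at hpw
    have haw : a ≤ w := by
      refine (Nat.pow_le_pow_iff_left two_ne_zero).mp (Nat.le_of_mul_le_mul_left ?_ hp.pos)
      rw [← htw]
      exact Nat.le_mul_of_pos_right _ (by omega)
    exact ih a (by omega) (x := b) ha (by omega)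
  · obtain ⟨b, a, hb, rfl⟩ := hcop.symm.exists_eq_mul_sq_of_mul_eq_mul_sq hp.ne_zero hpt
      ((mul_comm _ _).trans htw)
    refine ⟨a, b, Nat.pos_of_ne_zero ?_, hb⟩
    rintro rfl
    simp at hb

lemma exists_sq_add_one_eq_mul_sq {p : ℕ} (hp : p.Prime) (hp4 : p % 4 = 1) :
    ∃ a b, 0 < b ∧ a ^ 2 + 1 = p * b ^ 2 := by
  obtain ⟨s, hx, hy⟩ := Pell.Solution₁.exists_pos_of_not_isSquare (d := p)
    (by exact_mod_cast hp.pos) (Nat.prime_iff_prime_int.mp hp).not_isSquare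
  have hs := s.prop
  lift s.x to ℕ using by omega with x
  lift s.y to ℕ using hy.le with y
  have hxy : (x : ℤ) ^ 2 = 1 + p * y ^ 2 := by linarith
  exact exists_sq_add_one_eq_mul_sq_of_sq_eq_one_add_mul_sq hp hp4 (by exact_mod_cast hy)
    (by exact_mod_cast hxy)

theorem liouville_neg_infinitely_often_sq_sub_prime (p : ℕ) (hp : p.Prime)
    (hp4 : p % 4 = 1) :
    {n : ℕ | 0 < n ∧ p < n ^ 2 ∧ liouvilleFun (n ^ 2 - p) = -1}.Infinite := by
  obtain ⟨a, b, hb, hab⟩ := exists_sq_add_one_eq_mul_sq hp hp4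
  have ha : a ≠ 0 := by
    rintro rfl
    exact hp.one_lt.ne' (Nat.eq_one_of_mul_eq_one_right (by simpa using hab.symm))
  have hpb : (p * b) ^ 2 = p * a ^ 2 + p := by
    rw [mul_pow, sq p, mul_assoc, ← hab]
    ring
  have hpa : 0 < p * a ^ 2 := Nat.mul_pos hp.pos (by positivity)
  refine (infinite_setOf_liouville_sq_sub_eq_neg_one (p := p) (n := p * b) (by omega) ?_).mono ?_
  · rw [hpb, Nat.add_sub_cancel, liouville_apply_mul, liouville_prime hp, liouville_sq ha,
      mul_one]
  · rintro n ⟨hpn, hn⟩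
    refine ⟨Nat.pos_of_ne_zero ?_, hpn, ?_⟩
    · rintro rfl
      simp at hpn
    · rwa [liouvilleFun_eq_liouville (by omega)]
end
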